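/- Let Δ and ξ be random vectors in ℝ^d on a common probability space with E[⟨Δ, ξ⟩] = 0 and E[‖ξ‖²] ≤ σ², and set g = Δ + ξ. Assume g ≠ 0 almost surely and that all the relevant expectations are finite. Then (E[‖Δ‖²])² ≤ E[⟨Δ, g⟩² / ‖g‖²] · (E[‖Δ‖²] + σ²). -/

import Mathlib

/-!
Since `E⟨Δ, ξ⟩ = 0`, we have `E‖Δ‖² = E⟨Δ, g⟩ = E[(⟨Δ, g⟩ / ‖g‖) · ‖g‖]`, and Cauchy–Schwarz in `L²`
bounds its square by `E[⟨Δ, g⟩² / ‖g‖²] · E‖g‖²`, where `E‖g‖² = E‖Δ‖² + E‖ξ‖² ≤ E‖Δ‖² + σ²`.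
-/

open MeasureTheory
open scoped RealInnerProductSpace

namespace MeasureTheory

variable {α : Type*} [MeasurableSpace α] {μ : Measure α}

theorem sq_integral_mul_le_integral_sq_mul_integral_sq {f h : α → ℝ}
    (hf : Integrable (fun x => f x ^ 2) μ) (hh : Integrable (fun x => h x ^ 2) μ)
    (hfh : Integrable (fun x => f x * h x) μ) :
    (∫ x, f x * h x ∂μ) ^ 2 ≤ (∫ x, f x ^ 2 ∂μ) * ∫ x, h x ^ 2 ∂μ := by
  have hquad : ∀ t : ℝ, 0 ≤ (∫ x, f x ^ 2 ∂μ) * (t * t) + (-2 * ∫ x, f x * h x ∂μ) * t +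
      ∫ x, h x ^ 2 ∂μ := by
    intro t
    have hexpand : (fun x => (t * f x - h x) ^ 2) =
        fun x => t ^ 2 * f x ^ 2 + ((-2 * t) * (f x * h x) + h x ^ 2) := by
      funext x; ring
    have hsq : ∫ x, (t * f x - h x) ^ 2 ∂μ = (∫ x, f x ^ 2 ∂μ) * (t * t) +
        (-2 * ∫ x, f x * h x ∂μ) * t + ∫ x, h x ^ 2 ∂μ := by
      have hcross : Integrable (fun x => (-2 * t) * (f x * h x) + h x ^ 2) μ :=
        (hfh.const_mul _).add hh
      rw [hexpand, integral_add (hf.const_mul _) hcross,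
        integral_add (hfh.const_mul _) hh, integral_const_mul, integral_const_mul]
      ring
    exact hsq ▸ integral_nonneg fun x => sq_nonneg _
  have hdisc := discrim_le_zero hquad
  rw [discrim] at hdisc
  nlinarith

end MeasureTheory

section InnerProduct

variable {E : Type*} [NormedAddCommGroup E] [InnerProductSpace ℝ E]

-- With `x / 0 = 0`, both sides vanish at `y = 0`.
theorem real_inner_div_norm_mul_norm (x y : E) : ⟪x, y⟫ / ‖y‖ * ‖y‖ = ⟪x, y⟫ :=
  div_mul_cancel_of_imp fun hy => by simp [norm_eq_zero.mp hy]

variable {Ω : Type*} [MeasurableSpace Ω] {μ : Measure Ω} {Δ ξ : Ω → E}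

theorem integrable_inner_add_right_and_integral_eq (hΔ : Integrable (fun ω => ‖Δ ω‖ ^ 2) μ)
    (hΔξ : Integrable (fun ω => ⟪Δ ω, ξ ω⟫) μ) :
    Integrable (fun ω => ⟪Δ ω, Δ ω + ξ ω⟫) μ ∧
      ∫ ω, ⟪Δ ω, Δ ω + ξ ω⟫ ∂μ = (∫ ω, ‖Δ ω‖ ^ 2 ∂μ) + ∫ ω, ⟪Δ ω, ξ ω⟫ ∂μ := by
  have hexpand : (fun ω => ⟪Δ ω, Δ ω + ξ ω⟫) = fun ω => ‖Δ ω‖ ^ 2 + ⟪Δ ω, ξ ω⟫ := by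
    funext ω
    rw [inner_add_right, real_inner_self_eq_norm_sq]
  rw [hexpand]
  exact ⟨hΔ.add hΔξ, integral_add hΔ hΔξ⟩

theorem integrable_norm_add_sq_and_integral_eq (hΔ : Integrable (fun ω => ‖Δ ω‖ ^ 2) μ)
    (hξ : Integrable (fun ω => ‖ξ ω‖ ^ 2) μ) (hΔξ : Integrable (fun ω => ⟪Δ ω, ξ ω⟫) μ) :
    Integrable (fun ω => ‖Δ ω + ξ ω‖ ^ 2) μ ∧
      ∫ ω, ‖Δ ω + ξ ω‖ ^ 2 ∂μ =
        (∫ ω, ‖Δ ω‖ ^ 2 ∂μ) + 2 * (∫ ω, ⟪Δ ω, ξ ω⟫ ∂μ) + ∫ ω, ‖ξ ω‖ ^ 2 ∂μ := by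
  have hexpand : (fun ω => ‖Δ ω + ξ ω‖ ^ 2) =
      fun ω => ‖Δ ω‖ ^ 2 + 2 * ⟪Δ ω, ξ ω⟫ + ‖ξ ω‖ ^ 2 := by
    funext ω
    exact norm_add_sq_real _ _
  have hΔΔξ : Integrable (fun ω => ‖Δ ω‖ ^ 2 + 2 * ⟪Δ ω, ξ ω⟫) μ := hΔ.add (hΔξ.const_mul 2)
  rw [hexpand, integral_add hΔΔξ hξ, integral_add hΔ (hΔξ.const_mul 2), integral_const_mul]
  exact ⟨hΔΔξ.add hξ, rfl⟩

end InnerProduct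

theorem stmt_11_general {d : ℕ} {σ : ℝ}
    {Ω : Type*} [MeasurableSpace Ω] {μ : Measure Ω}
    (Δ ξ : Ω → EuclideanSpace ℝ (Fin d))
    (hmean : ∫ ω, ⟪Δ ω, ξ ω⟫ ∂μ = 0)
    (hvar : ∫ ω, ‖ξ ω‖ ^ 2 ∂μ ≤ σ ^ 2)
    (h1 : Integrable (fun ω => ‖Δ ω‖ ^ 2) μ)
    (h2 : Integrable (fun ω => ‖ξ ω‖ ^ 2) μ)
    (h3 : Integrable (fun ω => ⟪Δ ω, ξ ω⟫) μ)
    (h4 : Integrable (fun ω => ⟪Δ ω, Δ ω + ξ ω⟫ ^ 2 / ‖Δ ω + ξ ω‖ ^ 2) μ) :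
    (∫ ω, ‖Δ ω‖ ^ 2 ∂μ) ^ 2 ≤
      (∫ ω, ⟪Δ ω, Δ ω + ξ ω⟫ ^ 2 / ‖Δ ω + ξ ω‖ ^ 2 ∂μ) *
        ((∫ ω, ‖Δ ω‖ ^ 2 ∂μ) + σ ^ 2) := by
  obtain ⟨hint_inner, hinner⟩ := integrable_inner_add_right_and_integral_eq h1 h3
  obtain ⟨hint_norm, hnorm⟩ := integrable_norm_add_sq_and_integral_eq h1 h2 h3
  have hfactor : (fun ω => ⟪Δ ω, Δ ω + ξ ω⟫ / ‖Δ ω + ξ ω‖ * ‖Δ ω + ξ ω‖) =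
      fun ω => ⟪Δ ω, Δ ω + ξ ω⟫ :=
    funext fun ω => real_inner_div_norm_mul_norm _ _
  have hcs := sq_integral_mul_le_integral_sq_mul_integral_sq
    (by simpa only [div_pow] using h4) hint_norm (hfactor ▸ hint_inner)
  simp only [div_pow, hfactor] at hcs
  rw [hinner, hnorm, hmean, mul_zero, add_zero] at hcs
  exact hcs.trans <| mul_le_mul_of_nonneg_left (by linarith) <|
    integral_nonneg fun ω => by positivity

/-- For random vectors `Δ, ξ` with `E⟨Δ, ξ⟩ = 0`, `E‖ξ‖² ≤ σ²`,
`g = Δ + ξ` nonzero almost surely, and all relevant expectations finite,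
`(E[‖Δ‖²])² ≤ E[⟨Δ, g⟩²/‖g‖²] · (E[‖Δ‖²] + σ²)`. -/
theorem stmt_11 {d : ℕ} {σ : ℝ}
    {Ω : Type*} [MeasurableSpace Ω] {μ : Measure Ω} [IsProbabilityMeasure μ]
    (Δ ξ : Ω → EuclideanSpace ℝ (Fin d))
    (hmean : ∫ ω, ⟪Δ ω, ξ ω⟫ ∂μ = 0)
    (hvar : ∫ ω, ‖ξ ω‖ ^ 2 ∂μ ≤ σ ^ 2)
    (hg : ∀ᵐ ω ∂μ, Δ ω + ξ ω ≠ 0)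
    (h1 : Integrable (fun ω => ‖Δ ω‖ ^ 2) μ)
    (h2 : Integrable (fun ω => ‖ξ ω‖ ^ 2) μ)
    (h3 : Integrable (fun ω => ⟪Δ ω, ξ ω⟫) μ)
    (h4 : Integrable (fun ω => ⟪Δ ω, Δ ω + ξ ω⟫ ^ 2 / ‖Δ ω + ξ ω‖ ^ 2) μ)
    (h5 : Integrable (fun ω => ‖Δ ω + ξ ω‖ ^ 2) μ) :
    (∫ ω, ‖Δ ω‖ ^ 2 ∂μ) ^ 2 ≤
      (∫ ω, ⟪Δ ω, Δ ω + ξ ω⟫ ^ 2 / ‖Δ ω + ξ ω‖ ^ 2 ∂μ) *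
        ((∫ ω, ‖Δ ω‖ ^ 2 ∂μ) + σ ^ 2) :=
  stmt_11_general Δ ξ hmean hvar h1 h2 h3 h4
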